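/- Let H be a real Hilbert space and let φ₁,…,φ_t, φ̃₁,…,φ̃_t ∈ H satisfy ‖φ_i‖ ≤ M₀ and ‖φ̃_i - φ_i‖² ≤ ν for all i, with ν ≥ 0. Define Σ̂ = (1/t)∑_i φ_i ⊗ φ_i and Σ̃ = (1/t)∑_i φ̃_i ⊗ φ̃_i. Then ‖Σ̃ - Σ̂‖_HS ≤ ν + 2 M₀ √ν. -/

import Mathlib

/-!
With `r = φ̃ - φ`, each summand changes by `φ̃ ⊗ φ̃ - φ ⊗ φ = φ ⊗ r + r ⊗ φ + r ⊗ r`, and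
`‖x ⊗ y‖_HS = ‖x‖ ‖y‖`, so each summand moves by at most `2 M₀ √ν + ν` in Hilbert–Schmidt norm.
That norm is the `ℓ²` norm of `(T bᵢ)ᵢ`, hence subadditive on Hilbert–Schmidt operators, so the
average moves by at most the same amount.
-/

open scoped RealInnerProductSpace
open Finset

variable {H : Type*} [NormedAddCommGroup H] [InnerProductSpace ℝ H]

/-- The rank-one operator `x ⊗ y`, acting as `w ↦ ⟪y, w⟫ • x`. -/
noncomputable def rankOne (x y : H) : H →L[ℝ] H :=
  (innerSL ℝ y).smulRight x

/-- The Hilbert–Schmidt norm of an operator with respect to a Hilbert basis. -/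
noncomputable def hsNorm {ι : Type*} (b : HilbertBasis ι ℝ H) (T : H →L[ℝ] H) : ℝ :=
  Real.sqrt (∑' i, ‖T (b i)‖ ^ 2)

lemma rankOne_apply (x y w : H) : rankOne x y w = ⟪y, w⟫ • x := rfl

lemma rankOne_self_sub_rankOne_self (x y : H) :
    rankOne y y - rankOne x x
      = rankOne x (y - x) + rankOne (y - x) x + rankOne (y - x) (y - x) := by
  ext w
  simp only [sub_apply, add_apply, rankOne_apply, inner_sub_left]
  module

section HilbertSchmidt

variable {ι : Type*} (b : HilbertBasis ι ℝ H)

lemma hasSum_norm_rankOne_apply_sq (x y : H) :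
    HasSum (fun i => ‖rankOne x y (b i)‖ ^ 2) (‖y‖ ^ 2 * ‖x‖ ^ 2) := by
  have hsq : ∀ i, ‖rankOne x y (b i)‖ ^ 2 = ⟪y, b i⟫ * ⟪b i, y⟫ * ‖x‖ ^ 2 := fun i => by
    rw [rankOne_apply, norm_smul, mul_pow, Real.norm_eq_abs, sq_abs, real_inner_comm y (b i), sq]
  simpa only [hsq, real_inner_self_eq_norm_sq] using
    (b.hasSum_inner_mul_inner y y).mul_right (‖x‖ ^ 2)

lemma hsNorm_rankOne (x y : H) : hsNorm b (rankOne x y) = ‖y‖ * ‖x‖ := by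
  rw [hsNorm, (hasSum_norm_rankOne_apply_sq b x y).tsum_eq, ← mul_pow,
    Real.sqrt_sq (by positivity)]

lemma memℓp_rankOne (x y : H) : Memℓp (fun i => rankOne x y (b i)) 2 :=
  memℓp_gen (by simpa using (hasSum_norm_rankOne_apply_sq b x y).summable)

lemma hsNorm_eq_norm_lp (T : H →L[ℝ] H) (hT : Memℓp (fun i => T (b i)) 2) :
    hsNorm b T = ‖(⟨_, hT⟩ : lp (fun _ : ι => H) 2)‖ := by
  rw [hsNorm, lp.norm_eq_tsum_rpow (by norm_num), Real.sqrt_eq_rpow]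
  norm_num

lemma hsNorm_add_le {S T : H →L[ℝ] H} (hS : Memℓp (fun i => S (b i)) 2)
    (hT : Memℓp (fun i => T (b i)) 2) :
    hsNorm b (S + T) ≤ hsNorm b S + hsNorm b T := by
  have hST : Memℓp (fun i => (S + T) (b i)) 2 := hS.add hT
  rw [hsNorm_eq_norm_lp b _ hST, hsNorm_eq_norm_lp b _ hS, hsNorm_eq_norm_lp b _ hT]
  exact norm_add_le (⟨_, hS⟩ : lp (fun _ : ι => H) 2) ⟨_, hT⟩

lemma hsNorm_sum_le {κ : Type*} (s : Finset κ) (T : κ → H →L[ℝ] H)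
    (hT : ∀ j ∈ s, Memℓp (fun i => T j (b i)) 2) :
    hsNorm b (∑ j ∈ s, T j) ≤ ∑ j ∈ s, hsNorm b (T j) :=
  le_sum_of_subadditive_on_pred (hsNorm b) (fun S => Memℓp (fun i => S (b i)) 2)
    (by simp [hsNorm]) (fun _ _ => hsNorm_add_le b) (fun _ _ => Memℓp.add) T hT

lemma hsNorm_smul (c : ℝ) (T : H →L[ℝ] H) : hsNorm b (c • T) = |c| * hsNorm b T := by
  simp only [hsNorm, smul_apply, norm_smul, Real.norm_eq_abs, mul_pow,
    sq_abs]
  rw [tsum_mul_left, Real.sqrt_mul (sq_nonneg c), Real.sqrt_sq_eq_abs]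

lemma hsNorm_rankOne_self_sub_rankOne_self_le (x y : H) :
    hsNorm b (rankOne y y - rankOne x x) ≤ 2 * ‖x‖ * ‖y - x‖ + ‖y - x‖ ^ 2 := by
  rw [rankOne_self_sub_rankOne_self]
  have hmem := memℓp_rankOne b
  calc _ ≤ hsNorm b (rankOne x (y - x) + rankOne (y - x) x)
          + hsNorm b (rankOne (y - x) (y - x)) :=
        hsNorm_add_le b ((hmem _ _).add (hmem _ _)) (hmem _ _)
    _ ≤ hsNorm b (rankOne x (y - x)) + hsNorm b (rankOne (y - x) x)
          + hsNorm b (rankOne (y - x) (y - x)) := by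
        gcongr; exact hsNorm_add_le b (hmem _ _) (hmem _ _)
    _ = 2 * ‖x‖ * ‖y - x‖ + ‖y - x‖ ^ 2 := by
        simp only [hsNorm_rankOne]; ring

end HilbertSchmidt

theorem covariance_dictionary_error_general {ι : Type*} (b : HilbertBasis ι ℝ H)
    {t : ℕ} (ht : 0 < t) (φ φtil : Fin t → H) (M₀ ν : ℝ)
    (hφ : ∀ i, ‖φ i‖ ≤ M₀) (hres : ∀ i, ‖φtil i - φ i‖ ^ 2 ≤ ν)
    (Sighat Sigtil : H →L[ℝ] H)
    (hSighat : Sighat = (t : ℝ)⁻¹ • ∑ i, rankOne (φ i) (φ i))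
    (hSigtil : Sigtil = (t : ℝ)⁻¹ • ∑ i, rankOne (φtil i) (φtil i)) :
    hsNorm b (Sigtil - Sighat) ≤ ν + 2 * M₀ * Real.sqrt ν := by
  have hterm : ∀ i, hsNorm b (rankOne (φtil i) (φtil i) - rankOne (φ i) (φ i))
      ≤ ν + 2 * M₀ * Real.sqrt ν := fun i => by
    have hres_sqrt := Real.le_sqrt_of_sq_le (hres i)
    have := hsNorm_rankOne_self_sub_rankOne_self_le b (φ i) (φtil i)
    have : ‖φ i‖ * ‖φtil i - φ i‖ ≤ M₀ * Real.sqrt ν :=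
      mul_le_mul (hφ i) hres_sqrt (norm_nonneg _) ((norm_nonneg _).trans (hφ i))
    linarith [hres i]
  have ht' : (0 : ℝ) < t := by exact_mod_cast ht
  rw [hSigtil, hSighat, ← smul_sub, ← sum_sub_distrib, hsNorm_smul, abs_of_pos (by positivity)]
  calc (t : ℝ)⁻¹ * hsNorm b (∑ i, (rankOne (φtil i) (φtil i) - rankOne (φ i) (φ i)))
      ≤ (t : ℝ)⁻¹ * ∑ _i : Fin t, (ν + 2 * M₀ * Real.sqrt ν) := by
        gcongr
        refine (hsNorm_sum_le b _ _ fun i _ => ?_).trans (sum_le_sum fun i _ => hterm i)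
        exact (memℓp_rankOne b _ _).sub (memℓp_rankOne b _ _)
    _ = ν + 2 * M₀ * Real.sqrt ν := by
        rw [sum_const, card_univ, Fintype.card_fin, nsmul_eq_mul]
        field_simp

theorem covariance_dictionary_error [CompleteSpace H] {ι : Type*} (b : HilbertBasis ι ℝ H)
    {t : ℕ} (ht : 0 < t) (φ φtil : Fin t → H) (M₀ ν : ℝ) (hν : 0 ≤ ν)
    (hφ : ∀ i, ‖φ i‖ ≤ M₀) (hres : ∀ i, ‖φtil i - φ i‖ ^ 2 ≤ ν)
    (Sighat Sigtil : H →L[ℝ] H)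
    (hSighat : Sighat = (t : ℝ)⁻¹ • ∑ i, rankOne (φ i) (φ i))
    (hSigtil : Sigtil = (t : ℝ)⁻¹ • ∑ i, rankOne (φtil i) (φtil i)) :
    hsNorm b (Sigtil - Sighat) ≤ ν + 2 * M₀ * Real.sqrt ν :=
  covariance_dictionary_error_general b ht φ φtil M₀ ν hφ hres Sighat Sigtil hSighat hSigtil
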